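/- arXiv:2501.14799 — 3 statements merged into one kernel-verified Lean document; each statement's English description precedes it below -/
import Mathlib

section
/- Every pointed merge algebra of type 2 or of type 3 is faithful, i.e., σ̄ ≠ τ̄ for all distinct finite permutations σ, τ. -/
universe u

open scoped Classical

/-- A finite permutation of ω: an element of S_ω, i.e. a permutation moving
only finitely many points. -/
def FinPerm (σ : Equiv.Perm ℕ) : Prop := {n : ℕ | σ n ≠ n}.Finite

/-- The raw operations of a merge algebra: the binary merges `⋆_n` and the
actions `σ̄` of (finite) permutations. -/
structure MergeOps (A : Type u) where
  star : ℕ → A → A → A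
  bar : Equiv.Perm ℕ → A → A

namespace MergeOps

variable {A : Type u}

/-- `chain g k = ((g 0 ⋆_1 g 1) ⋆_2 g 2) … ⋆_k (g k)`. -/
def chain (M : MergeOps A) (g : ℕ → A) : ℕ → A
  | 0 => g 0
  | i + 1 => M.star (i + 1) (M.chain g i) (g (i + 1))

/-- `chainStar g k y = ((…(g 0 ⋆_1 g 1) ⋆_2 …) ⋆_{k-1} g (k-1)) ⋆_k y`. -/
def chainStar (M : MergeOps A) (g : ℕ → A) (k : ℕ) (y : A) : A :=
  match k with
  | 0 => y
  | k + 1 => M.star (k + 1) (M.chain g k) y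

/-- The `n`-coordinate of `x` relative to the coordinator `pt`:
`x[n] = τ̄^n_0(x) ⋆_1 pt`. -/
def coord (M : MergeOps A) (pt x : A) (n : ℕ) : A :=
  M.star 1 (M.bar (Equiv.swap 0 n) x) pt

end MergeOps

/-- A merge algebra: operations `⋆_n` and `σ̄` satisfying axioms (B1)–(B7). -/
structure MergeAlgebra (A : Type u) extends MergeOps A where
  /-- (B1) each `⋆_n` is associative -/
  star_assoc : ∀ (n : ℕ) (x y z : A), star n (star n x y) z = star n x (star n y z)
  /-- (B1) each `⋆_n` is idempotent -/
  star_idem : ∀ (n : ℕ) (x : A), star n x x = x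
  /-- (B2) -/
  star_zero : ∀ x y : A, star 0 x y = y
  /-- (B3), first part (k ≥ n) -/
  B3a : ∀ {n k : ℕ}, n ≤ k → ∀ x y z : A, star n (star k x y) z = star n x z
  /-- (B3), second part (k ≥ n) -/
  B3b : ∀ {n k : ℕ}, n ≤ k → ∀ x y z : A, star k x (star n y z) = star k x z
  /-- (B4) (k < n) -/
  B4 : ∀ {n k : ℕ}, k < n → ∀ x y z : A, star n (star k x y) z = star k x (star n y z)
  /-- (B5) `σ̄(τ̄(x)) = (τ∘σ)‾(x)` -/
  B5 : ∀ σ τ : Equiv.Perm ℕ, FinPerm σ → FinPerm τ → ∀ x : A,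
      bar σ (bar τ x) = bar (τ * σ) x
  /-- (B5) `ῑ(x) = x` -/
  bar_id : ∀ x : A, bar 1 x = x
  /-- (B6): for `n ≤ k` and `σ` a permutation of `k`, with `f i = x` iff `σ i < n`:
  `σ̄(x ⋆_n y) = ((…(σ̄(f 0) ⋆_1 σ̄(f 1)) ⋆_2 …) ⋆_{k-1} σ̄(f (k-1))) ⋆_k y`. -/
  B6 : ∀ {n k : ℕ}, n ≤ k → ∀ σ : Equiv.Perm ℕ, (∀ i, k ≤ i → σ i = i) →
      ∀ x y : A, bar σ (star n x y) =
        toMergeOps.chainStar (fun i => bar σ (if σ i < n then x else y)) k y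
  /-- (B7) -/
  B7 : ∀ {m n : ℕ} (σ τ : Equiv.Perm ℕ), FinPerm σ → FinPerm τ →
      (∀ i, m ≤ i → i < n → σ i = τ i) →
      ∀ x y z : A, star n (star m z (bar σ x)) y = star n (star m z (bar τ x)) y

/-!
Coordinates transform under the permutation action by `σ̄(x)[k] = x[σ k]`, so `σ̄ = τ̄`
forces `x[σ k] = x[τ k]` for every `x` and `k`. It therefore suffices that coordinates
separate indices: for `m ≠ j` some `x` has `x[m] ≠ x[j]`. In type 2 the coordinator itself
does this. In type 3, the element `c = a[n]` has `c[0] = a[n] ≠ 1` and `c[k] = 1[k] = 1`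
for `k ≥ 1`, and transposing `0` with `m` moves the exceptional coordinate to `m`.
-/

lemma finPerm_mul {σ τ : Equiv.Perm ℕ} (hσ : FinPerm σ) (hτ : FinPerm τ) :
    FinPerm (σ * τ) := by
  refine (hσ.union hτ).subset fun n hn => ?_
  by_contra hc
  simp_all [Equiv.Perm.mul_apply]

lemma finPerm_swap (a b : ℕ) : FinPerm (Equiv.swap a b) := by
  refine ((Set.finite_singleton b).insert a).subset fun n hn => ?_
  by_contra hc
  simp only [Set.mem_insert_iff, Set.mem_singleton_iff, not_or] at hc
  exact hn (Equiv.swap_apply_of_ne_of_ne hc.1 hc.2)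

namespace MergeAlgebra

variable {A : Type u} (M : MergeAlgebra A)

def CoordsSeparate (pt : A) : Prop :=
  ∀ m j : ℕ, m ≠ j → ∃ x : A, M.coord pt x m ≠ M.coord pt x j

lemma star_one_chain (g : ℕ → A) (y : A) (j : ℕ) :
    M.star 1 (M.chain g j) y = M.star 1 (g 0) y := by
  induction j with
  | zero => rfl
  | succ j ih => rw [MergeOps.chain, M.B3a (by omega), ih]

lemma coord_bar (pt x : A) {σ : Equiv.Perm ℕ} (hσ : FinPerm σ) (k : ℕ) :
    M.coord pt (M.bar σ x) k = M.coord pt x (σ k) := by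
  -- (B7) with `m = 0`, `n = 1`: the merge `⋆_1` only sees where a permutation sends `0`.
  have hagree : ∀ i, 0 ≤ i → i < 1 → (σ * Equiv.swap 0 k) i = Equiv.swap 0 (σ k) i := by
    intro i _ hi
    obtain rfl : i = 0 := by omega
    simp [Equiv.Perm.mul_apply]
  have h7 := M.B7 _ _ (finPerm_mul hσ (finPerm_swap 0 k)) (finPerm_swap 0 (σ k)) hagree x pt pt
  rw [M.star_zero, M.star_zero] at h7
  rw [MergeOps.coord, M.B5 _ _ (finPerm_swap 0 k) hσ, h7, MergeOps.coord]

lemma coord_star_one_zero (pt x y : A) :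
    M.coord pt (M.star 1 x y) 0 = M.coord pt x 0 := by
  rw [MergeOps.coord, MergeOps.coord, Equiv.swap_self, ← Equiv.Perm.one_def, M.bar_id,
    M.bar_id, M.B3a le_rfl]

lemma coord_star_one_of_pos (pt x y : A) {k : ℕ} (hk : 1 ≤ k) :
    M.coord pt (M.star 1 x y) k = M.coord pt y k := by
  have hfix : ∀ i, k + 1 ≤ i → Equiv.swap 0 k i = i := fun i hi =>
    Equiv.swap_apply_of_ne_of_ne (by omega) (by omega)
  rw [MergeOps.coord, M.B6 (by omega) _ hfix, MergeOps.chainStar, M.B3a (by omega),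
    star_one_chain, Equiv.swap_apply_left, if_neg (by omega), MergeOps.coord]

lemma coord_coord_zero (pt x : A) (n : ℕ) :
    M.coord pt (M.coord pt x n) 0 = M.coord pt x n :=
  (M.coord_star_one_zero pt _ pt).trans <| by
    rw [M.coord_bar pt x (finPerm_swap 0 n), Equiv.swap_apply_left]

lemma coord_coord_of_pos (pt x : A) (n : ℕ) {k : ℕ} (hk : 1 ≤ k) :
    M.coord pt (M.coord pt x n) k = M.coord pt pt k :=
  M.coord_star_one_of_pos pt _ pt hk

theorem bar_injOn_of_coordsSeparate {pt : A} (hsep : M.CoordsSeparate pt) :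
    Set.InjOn M.bar {σ | FinPerm σ} := by
  intro σ hσ τ hτ h
  ext k
  by_contra hne
  obtain ⟨x, hx⟩ := hsep (σ k) (τ k) hne
  exact hx (by rw [← M.coord_bar pt x hσ, ← M.coord_bar pt x hτ, h])

lemma coordsSeparate_of_coord_injective {pt : A}
    (hinj : ∀ k j : ℕ, k ≠ j → M.coord pt pt k ≠ M.coord pt pt j) :
    M.CoordsSeparate pt :=
  fun m j hmj => ⟨pt, hinj m j hmj⟩

lemma coordsSeparate_of_coord_eq_pt {pt : A} (hpt : ∀ k : ℕ, M.coord pt pt k = pt)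
    {a : A} {n : ℕ} (han : M.coord pt a n ≠ pt) : M.CoordsSeparate pt := by
  intro m j hmj
  refine ⟨M.bar (Equiv.swap 0 m) (M.coord pt a n), ?_⟩
  have hj : 1 ≤ Equiv.swap 0 m j := by
    rw [Nat.one_le_iff_ne_zero, Ne, Equiv.swap_apply_eq_iff, Equiv.swap_apply_left]
    exact hmj.symm
  rw [M.coord_bar pt _ (finPerm_swap 0 m), M.coord_bar pt _ (finPerm_swap 0 m),
    Equiv.swap_apply_right, coord_coord_zero, M.coord_coord_of_pos pt a n hj, hpt]
  exact han

end MergeAlgebra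

/-- every pointed merge algebra of type 2 (`1[k] ≠ 1[j]` for
`k ≠ j`) or of type 3 (`1[k] = 1` for all `k` but `a[n] ≠ 1` for some `a, n`)
is faithful: `σ̄ ≠ τ̄` for all distinct finite permutations `σ, τ`. -/
theorem type2_or_type3_faithful {A : Type u} (M : MergeAlgebra A) (pt : A)
    (h : (∀ k j : ℕ, k ≠ j → M.toMergeOps.coord pt pt k ≠ M.toMergeOps.coord pt pt j) ∨
      ((∀ k : ℕ, M.toMergeOps.coord pt pt k = pt) ∧
        ∃ (a : A) (n : ℕ), M.toMergeOps.coord pt a n ≠ pt)) :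
    ∀ σ τ : Equiv.Perm ℕ, FinPerm σ → FinPerm τ → σ ≠ τ → M.bar σ ≠ M.bar τ := by
  have hsep : M.CoordsSeparate pt := by
    rcases h with htype2 | ⟨hpt, a, n, han⟩
    · exact M.coordsSeparate_of_coord_injective htype2
    · exact M.coordsSeparate_of_coord_eq_pt hpt han
  intro σ τ hσ hτ hne hbar
  exact hne (M.bar_injOn_of_coordsSeparate hsep hσ hτ hbar)
end

section
/- Every cm-monoid of type 2 is noncommutative (its multiplicative monoid is not commutative). -/
universe u

open scoped Classical

/-- An m-monoid: a monoid structure together with a merge algebra structure on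
the same carrier, satisfying right distributivity (L1). -/
structure MMonoid (A : Type u) extends MergeAlgebra A where
  mul : A → A → A
  one : A
  mul_assoc : ∀ x y z : A, mul (mul x y) z = mul x (mul y z)
  one_mul : ∀ x : A, mul one x = x
  mul_one : ∀ x : A, mul x one = x
  /-- (L1) right distributivity -/
  L1 : ∀ (n : ℕ) (x y z : A), mul (star n x y) z = star n (mul x z) (mul y z)

namespace MMonoid

variable {A : Type u} (M : MMonoid A)

/-- A cm-monoid is an m-monoid satisfying (L2): `σ̄(x)·y = σ̄(x·y)`. -/
def IsCM : Prop :=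
  ∀ σ : Equiv.Perm ℕ, FinPerm σ → ∀ x y : A, M.mul (M.bar σ x) y = M.bar σ (M.mul x y)

/-- An am-monoid is an m-monoid satisfying (L3): `σ̄(x·y) = σ̄(x)·σ̄(y)`. -/
def IsAM : Prop :=
  ∀ σ : Equiv.Perm ℕ, FinPerm σ → ∀ x y : A, M.bar σ (M.mul x y) = M.mul (M.bar σ x) (M.bar σ y)

/-- The `n`-coordinate `x[n] = τ̄^n_0(x) ⋆_1 1` (the coordinator is the unit). -/
def coord (x : A) (n : ℕ) : A := M.toMergeOps.coord M.one x n

/-- Extensionality: elements with the same coordinates are equal. -/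
def Extensional : Prop := ∀ x y : A, (∀ n : ℕ, M.coord x n = M.coord y n) → x = y

/-- An element has rank ≤ n iff `x ⋆_n 1 = x`; the m-monoid is finitely ranked
if every element has finite rank. -/
def FinitelyRanked : Prop := ∀ x : A, ∃ n : ℕ, M.star n x M.one = x

/-- A degenerate m-monoid. -/
def Degenerate : Prop :=
  (∀ σ : Equiv.Perm ℕ, FinPerm σ → ∀ x : A, M.bar σ x = x) ∧
    (∀ (n : ℕ) (x y : A), M.star n x y = y)

/-- `a` is finite dimensional: for every `n` there is `m` with
`(a·(1 ⋆_m b ⋆_{m+k} 1)) ⋆_n a = a` for all `b` and `k`. -/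
def FinDimEl (a : A) : Prop :=
  ∀ n : ℕ, ∃ m : ℕ, ∀ (b : A) (k : ℕ),
    M.star n (M.mul a (M.star (m + k) (M.star m M.one b) M.one)) a = a

/-- `a` is ω-finite dimensional: for every `n` there is `m` with
`(a·(1 ⋆_m b)) ⋆_n a = a` for all `b`. -/
def OmegaFinDimEl (a : A) : Prop :=
  ∀ n : ℕ, ∃ m : ℕ, ∀ b : A,
    M.star n (M.mul a (M.star m M.one b)) a = a

/-- An m-monoid is finite dimensional if every element is. -/
def FinDim : Prop := ∀ a : A, M.FinDimEl a

/-- An m-monoid is ω-finite dimensional if every element is. -/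
def OmegaFinDim : Prop := ∀ a : A, M.OmegaFinDimEl a

end MMonoid

/-!
By (L2) and (B5), `σ ↦ σ̄(1)` turns composition of permutations into (reversed)
multiplication. In a commutative monoid it is therefore constant on conjugacy classes,
and since the transpositions `τ^j_0` and `τ^k_0` (`j, k ≠ 0`) are conjugate, all the
coordinates `1[j]`, `1[k]` with `j, k ≠ 0` coincide, which type 2 forbids.
-/

namespace FinPerm

theorem swap (a b : ℕ) : FinPerm (Equiv.swap a b) :=
  ((Set.finite_singleton b).insert a).subset fun n hn => by
    by_contra h
    simp only [Set.mem_insert_iff, Set.mem_singleton_iff, not_or] at h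
    exact hn (Equiv.swap_apply_of_ne_of_ne h.1 h.2)

theorem mul {σ τ : Equiv.Perm ℕ} (hσ : FinPerm σ) (hτ : FinPerm τ) : FinPerm (σ * τ) :=
  (hσ.union hτ).subset fun n hn => by
    by_contra h
    simp only [Set.mem_union, Set.mem_ofPred_eq, not_or, not_not] at h
    exact hn (by simp [h.1, h.2])

theorem inv {σ : Equiv.Perm ℕ} (hσ : FinPerm σ) : FinPerm σ⁻¹ :=
  (hσ.image σ).subset fun n hn =>
    ⟨σ⁻¹ n, fun h => hn (by simpa using h.symm), σ.apply_symm_apply n⟩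

end FinPerm

namespace MMonoid

variable {A : Type u} (M : MMonoid A)

def barOne (σ : Equiv.Perm ℕ) : A := M.bar σ M.one

theorem barOne_one : M.barOne 1 = M.one := M.bar_id M.one

theorem coord_one (n : ℕ) : M.coord M.one n = M.star 1 (M.barOne (Equiv.swap 0 n)) M.one :=
  rfl

theorem barOne_mul_barOne (hcm : M.IsCM) {σ τ : Equiv.Perm ℕ} (hσ : FinPerm σ)
    (hτ : FinPerm τ) : M.mul (M.barOne σ) (M.barOne τ) = M.barOne (τ * σ) := by
  rw [barOne, hcm σ hσ, M.one_mul, barOne, barOne, M.B5 σ τ hσ hτ]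

theorem barOne_conj_of_comm (hcm : M.IsCM) (hcomm : ∀ x y : A, M.mul x y = M.mul y x)
    {σ τ : Equiv.Perm ℕ} (hσ : FinPerm σ) (hτ : FinPerm τ) :
    M.barOne (τ * σ * τ⁻¹) = M.barOne σ :=
  calc M.barOne (τ * σ * τ⁻¹)
      = M.mul (M.barOne τ⁻¹) (M.mul (M.barOne σ) (M.barOne τ)) := by
        rw [M.barOne_mul_barOne hcm hσ hτ, M.barOne_mul_barOne hcm hτ.inv (hτ.mul hσ)]
    _ = M.mul (M.barOne σ) (M.mul (M.barOne τ) (M.barOne τ⁻¹)) := by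
        rw [hcomm, M.mul_assoc]
    _ = M.barOne σ := by
        rw [M.barOne_mul_barOne hcm hτ hτ.inv, inv_mul_cancel, barOne_one, M.mul_one]

theorem coord_one_eq_of_comm (hcm : M.IsCM) (hcomm : ∀ x y : A, M.mul x y = M.mul y x)
    {j k : ℕ} (hj : 0 ≠ j) (hk : 0 ≠ k) : M.coord M.one j = M.coord M.one k := by
  have hconj : Equiv.swap 0 k = Equiv.swap j k * Equiv.swap 0 j * (Equiv.swap j k)⁻¹ := by
    rw [Equiv.swap_inv, Equiv.swap_mul_swap_mul_swap hj hk, Equiv.swap_comm]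
  rw [coord_one, coord_one, hconj,
    M.barOne_conj_of_comm hcm hcomm (FinPerm.swap 0 j) (FinPerm.swap j k)]

end MMonoid

/-- STATEMENT 10: every cm-monoid of type 2 is noncommutative. -/
theorem cm_type2_noncommutative {A : Type u} (M : MMonoid A) (hcm : M.IsCM)
    (h2 : ∀ k j : ℕ, k ≠ j → M.coord M.one k ≠ M.coord M.one j) :
    ¬ ∀ x y : A, M.mul x y = M.mul y x := fun hcomm =>
  h2 1 2 (by decide) (M.coord_one_eq_of_comm hcm hcomm one_ne_zero.symm two_ne_zero.symm)
end

section
/- Let M be a cm-monoid or an am-monoid. Then the set M_Fin of finite dimensional elements and the set M_ωFin of ω-finite dimensional elements are pointed merge subalgebras of the merge reduct of M: each contains the unit 1 and is closed under every operation ⋆_n and every σ̄. -/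
universe u

open scoped Classical

/-! Both notions of finite dimensionality say that for every `n` there is `m` with
`(a·c) ⋆_n a = a` for all tests `c` of level `m`, for two families of tests that get more
restrictive as `m` grows. Closure under `⋆_p` then follows from (B3) and (B4). For `σ̄`,
take `N ≥ n` beyond the support of `σ`: then `σ̄` commutes with `⋆_N` by (B6), and with
right multiplication by tests of high level by (L2), or by (L3) since there `σ̄ 1 = 1`. -/

lemma FinPerm.inv_s12 {σ : Equiv.Perm ℕ} (hσ : FinPerm σ) : FinPerm σ⁻¹ := by
  refine hσ.subset fun n hn he => hn ?_
  rw [Equiv.Perm.inv_eq_iff_eq]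
  exact he.symm

lemma FinPerm.exists_forall_ge_apply_eq {σ : Equiv.Perm ℕ} (hσ : FinPerm σ) :
    ∃ K, ∀ i, K ≤ i → σ i = i :=
  Filter.eventually_atTop.1 (Nat.cofinite_eq_atTop ▸ Filter.eventually_cofinite.2 hσ)

namespace MergeAlgebra

variable {A : Type u} (M : MergeAlgebra A)

lemma chain_eq_of_forall_le {g : ℕ → A} {x : A} {j : ℕ} (hg : ∀ i, i ≤ j → g i = x) :
    M.chain g j = x := by
  induction j with
  | zero => exact hg 0 le_rfl
  | succ j ih =>
    rw [MergeOps.chain, ih fun i hi => hg i (by omega), hg (j + 1) le_rfl, M.star_idem]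

/-- A permutation fixing every `i ≥ N` maps `{0, …, N-1}` into itself, so in (B6) with
`k = n = N` every entry of the chain is `σ̄ x`. -/
lemma bar_star_of_forall_ge_apply_eq {σ : Equiv.Perm ℕ} {N : ℕ}
    (hfix : ∀ i, N ≤ i → σ i = i) (x y : A) :
    M.bar σ (M.star N x y) = M.star N (M.bar σ x) y := by
  cases N with
  | zero =>
    obtain rfl : σ = 1 := Equiv.ext fun i => hfix i i.zero_le
    rw [M.bar_id, M.bar_id]
  | succ N =>
    have hlt : ∀ i, i < N + 1 → σ i < N + 1 := fun i hi => by
      by_contra! hge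
      have := σ.injective (hfix (σ i) hge)
      omega
    rw [M.B6 le_rfl σ hfix x y, MergeOps.chainStar]
    congr 1
    exact M.chain_eq_of_forall_le fun i hi => by simp [hlt i (by omega)]

lemma star_star_self_of_le {n N : ℕ} (h : n ≤ N) (u a : A) :
    M.star n u (M.star N u a) = M.star N u a := by
  rcases h.eq_or_lt with rfl | hlt
  · rw [← M.star_assoc, M.star_idem]
  · rw [← M.B4 hlt, M.star_idem]

end MergeAlgebra

namespace MMonoid

variable {A : Type u} (M : MMonoid A)

lemma bar_one_of_isAM (ham : M.IsAM) {σ : Equiv.Perm ℕ} (hσ : FinPerm σ) :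
    M.bar σ M.one = M.one := by
  have h := ham σ hσ (M.bar σ⁻¹ M.one) M.one
  rwa [M.mul_one, M.B5 σ σ⁻¹ hσ hσ.inv_s12, inv_mul_cancel, M.bar_id, M.one_mul, eq_comm] at h

lemma mul_bar_eq_bar_mul (h : M.IsCM ∨ M.IsAM) {σ : Equiv.Perm ℕ} (hσ : FinPerm σ)
    {c : A} (hc : M.IsAM → M.bar σ c = c) (a : A) :
    M.mul (M.bar σ a) c = M.bar σ (M.mul a c) := by
  rcases h with hcm | ham
  · exact hcm σ hσ a c
  · rw [ham σ hσ, hc ham]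

def FinDimWrt (T : ℕ → Set A) (a : A) : Prop :=
  ∀ n, ∃ m, ∀ c ∈ T m, M.star n (M.mul a c) a = a

structure IsTestFamily (T : ℕ → Set A) : Prop where
  antitone : Antitone T
  star_one : ∀ n, ∀ c ∈ T n, M.star n c M.one = M.one
  bar_eq : M.IsAM → ∀ m σ, FinPerm σ → (∀ i, m ≤ i → σ i = i) → ∀ c ∈ T m, M.bar σ c = c

namespace IsTestFamily

variable {M} {T : ℕ → Set A} (hT : M.IsTestFamily T)
include hT

lemma finDimWrt_one : M.FinDimWrt T M.one := fun n =>
  ⟨n, fun c hc => by rw [M.one_mul, hT.star_one n c hc]⟩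

lemma finDimWrt_star (p : ℕ) {x y : A} (hx : M.FinDimWrt T x) (hy : M.FinDimWrt T y) :
    M.FinDimWrt T (M.star p x y) := by
  intro n
  obtain ⟨mx, hmx⟩ := hx n
  obtain ⟨my, hmy⟩ := hy n
  refine ⟨max mx my, fun c hc => ?_⟩
  have hxc := hmx c (hT.antitone (le_max_left mx my) hc)
  have hyc := hmy c (hT.antitone (le_max_right mx my) hc)
  rw [M.L1]
  rcases lt_or_ge p n with hpn | hnp
  · rw [M.B4 hpn, M.B3b hpn.le, hyc]
    conv_rhs => rw [← hxc, M.B3a hpn.le]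
  · rw [M.B3a hnp]
    rcases hnp.eq_or_lt with rfl | hnp
    · rw [← M.star_assoc, hxc]
    · rw [← M.B4 hnp, hxc]

lemma finDimWrt_bar (h : M.IsCM ∨ M.IsAM) {σ : Equiv.Perm ℕ} (hσ : FinPerm σ) {a : A}
    (ha : M.FinDimWrt T a) : M.FinDimWrt T (M.bar σ a) := by
  obtain ⟨K, hK⟩ := hσ.exists_forall_ge_apply_eq
  intro n
  obtain ⟨m, hm⟩ := ha (max n K)
  refine ⟨max m K, fun c hc => ?_⟩
  have hbar_a : M.bar σ a = M.star (max n K) (M.bar σ (M.mul a c)) a := by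
    conv_lhs => rw [← hm c (hT.antitone (le_max_left m K) hc)]
    exact M.bar_star_of_forall_ge_apply_eq (fun i hi => hK i (le_of_max_le_right hi)) _ _
  have hcomm : M.mul (M.bar σ a) c = M.bar σ (M.mul a c) :=
    M.mul_bar_eq_bar_mul h hσ
      (fun ham => hT.bar_eq ham _ σ hσ (fun i hi => hK i (le_of_max_le_right hi)) c hc) a
  rw [hcomm, hbar_a]
  exact M.star_star_self_of_le (le_max_left n K) _ _

end IsTestFamily

def finDimTests (m : ℕ) : Set A :=
  Set.range fun bk : A × ℕ => M.star (m + bk.2) (M.star m M.one bk.1) M.one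

def omegaFinDimTests (m : ℕ) : Set A := Set.range (M.star m M.one)

lemma finDimEl_eq : M.FinDimEl = M.FinDimWrt M.finDimTests := by
  ext a
  simp only [FinDimEl, FinDimWrt, finDimTests, Set.forall_mem_range, Prod.forall]

lemma omegaFinDimEl_eq : M.OmegaFinDimEl = M.FinDimWrt M.omegaFinDimTests := by
  ext a
  simp only [OmegaFinDimEl, FinDimWrt, omegaFinDimTests, Set.forall_mem_range]

lemma isTestFamily_finDimTests : M.IsTestFamily M.finDimTests where
  antitone := by
    rintro m₀ m hm - ⟨⟨b, k⟩, rfl⟩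
    refine ⟨(M.star m M.one b, m - m₀ + k), ?_⟩
    dsimp only
    rw [M.star_star_self_of_le hm, show m₀ + (m - m₀ + k) = m + k by omega]
  star_one := by
    rintro n - ⟨⟨b, k⟩, rfl⟩
    rw [M.B3a (n.le_add_right k), M.B3a le_rfl, M.star_idem]
  bar_eq := by
    rintro ham m σ hσ hfix - ⟨⟨b, k⟩, rfl⟩
    rw [M.bar_star_of_forall_ge_apply_eq (fun i hi => hfix i (by omega)),
      M.bar_star_of_forall_ge_apply_eq hfix, M.bar_one_of_isAM ham hσ]

lemma isTestFamily_omegaFinDimTests : M.IsTestFamily M.omegaFinDimTests where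
  antitone := by
    rintro m₀ m hm - ⟨b, rfl⟩
    exact ⟨M.star m M.one b, M.star_star_self_of_le hm _ _⟩
  star_one := by
    rintro n - ⟨b, rfl⟩
    rw [M.B3a le_rfl, M.star_idem]
  bar_eq := by
    rintro ham m σ hσ hfix - ⟨b, rfl⟩
    rw [M.bar_star_of_forall_ge_apply_eq hfix, M.bar_one_of_isAM ham hσ]

end MMonoid

/-- STATEMENT 13: if `M` is a cm-monoid or an am-monoid, then the sets of
finite dimensional and of ω-finite dimensional elements are pointed merge
subalgebras of the merge reduct of `M`: each contains the unit and is closed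
under every `⋆_n` and every `σ̄` (for finite permutations). -/
theorem findim_merge_subalgebras {A : Type u} (M : MMonoid A)
    (h : M.IsCM ∨ M.IsAM) :
    (M.FinDimEl M.one ∧
      (∀ (n : ℕ) (x y : A), M.FinDimEl x → M.FinDimEl y → M.FinDimEl (M.star n x y)) ∧
      (∀ σ : Equiv.Perm ℕ, FinPerm σ → ∀ x : A, M.FinDimEl x → M.FinDimEl (M.bar σ x))) ∧
    (M.OmegaFinDimEl M.one ∧
      (∀ (n : ℕ) (x y : A),
        M.OmegaFinDimEl x → M.OmegaFinDimEl y → M.OmegaFinDimEl (M.star n x y)) ∧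
      (∀ σ : Equiv.Perm ℕ, FinPerm σ → ∀ x : A,
        M.OmegaFinDimEl x → M.OmegaFinDimEl (M.bar σ x))) := by
  rw [M.finDimEl_eq, M.omegaFinDimEl_eq]
  have hfin := M.isTestFamily_finDimTests
  have homega := M.isTestFamily_omegaFinDimTests
  exact ⟨⟨hfin.finDimWrt_one, fun n _ _ => hfin.finDimWrt_star n,
      fun _ hσ _ => hfin.finDimWrt_bar h hσ⟩,
    ⟨homega.finDimWrt_one, fun n _ _ => homega.finDimWrt_star n,
      fun _ hσ _ => homega.finDimWrt_bar h hσ⟩⟩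
end
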